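/- arXiv:1703.01855 — 2 statements merged into one kernel-verified Lean document; each statement's English description precedes it below -/
import Mathlib

section
/- Let m > 0, δ > 0, C ≥ 0, and let f : [0,m] × [0,1] → ℂ (viewing the rectangle as a subset of ℂ) be continuous, holomorphic on the interior, with ∫∫ ‖f′‖² dA ≤ C over the rectangle. Suppose A and B are sets in ℂ with f([0,m] × {0}) ⊆ A, f([0,m] × {1}) ⊆ B, and the distance between A and B is at least δ. Then m ≤ C/δ². -/
/-!
Every vertical segment `{x} × [0, 1]` of the rectangle joins the two horizontal sides, so its
image has length at least `δ`; by Cauchy–Schwarz, `δ² ≤ ∫₀¹ ‖f'(x + iy)‖² dy`. Integrating over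
`x ∈ [0, m]` and using Fubini gives `m δ² ≤ ∫∫ ‖f'‖² ≤ C`.
-/

open MeasureTheory Complex Set

theorem measureReal_mul_le_setIntegral_prod {α β : Type*} [MeasurableSpace α]
    [MeasurableSpace β] {μ : Measure α} {ν : Measure β} [SFinite μ] [SFinite ν]
    {F : α × β → ℝ} {s : Set α} {t : Set β} {c : ℝ} (hs : μ s ≠ ⊤)
    (hF : IntegrableOn F (s ×ˢ t) (μ.prod ν))
    (hc : ∀ᵐ x ∂μ.restrict s, IntegrableOn (fun y ↦ F (x, y)) t ν →
      c ≤ ∫ y in t, F (x, y) ∂ν) :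
    μ.real s * c ≤ ∫ p in s ×ˢ t, F p ∂μ.prod ν := by
  rw [setIntegral_prod F hF, ← smul_eq_mul, ← setIntegral_const]
  rw [IntegrableOn, ← Measure.prod_restrict] at hF
  refine integral_mono_ae (integrableOn_const hs) hF.integral_prod_left ?_
  filter_upwards [hc, hF.prod_right_ae] with x hx hxint using hx hxint

theorem integrableOn_reProdIm_iff {E : Type*} [NormedAddCommGroup E] {g : ℂ → E}
    {s t : Set ℝ} :
    IntegrableOn g (s ×ℂ t) ↔ IntegrableOn (fun p : ℝ × ℝ ↦ g (p.1 + p.2 * I)) (s ×ˢ t) := by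
  rw [← (volume_preserving_equiv_real_prod.symm).integrableOn_comp_preimage
    measurableEquivRealProd.symm.measurableEmbedding]
  simp only [Function.comp_def, measurableEquivRealProd_symm_apply, mk_eq_add_mul_I]
  rfl

theorem setIntegral_reProdIm {E : Type*} [NormedAddCommGroup E] [NormedSpace ℝ E] (g : ℂ → E)
    (s t : Set ℝ) :
    ∫ z in s ×ℂ t, g z = ∫ p in s ×ˢ t, g (p.1 + p.2 * I) := by
  rw [← (volume_preserving_equiv_real_prod.symm).setIntegral_preimage_emb
    measurableEquivRealProd.symm.measurableEmbedding]
  simp only [measurableEquivRealProd_symm_apply, mk_eq_add_mul_I]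
  rfl

theorem sq_integral_le_integral_sq {Ω : Type*} [MeasurableSpace Ω] {μ : Measure Ω}
    [IsProbabilityMeasure μ] {X : Ω → ℝ} (hX : MemLp X 2 μ) :
    (∫ ω, X ω ∂μ) ^ 2 ≤ ∫ ω, X ω ^ 2 ∂μ := by
  have h := ProbabilityTheory.variance_nonneg X μ
  rw [ProbabilityTheory.variance_eq_sub hX] at h
  simpa [sub_nonneg] using h

theorem norm_sub_sq_le_integral_norm_sq_of_hasDerivAt {E : Type*} [NormedAddCommGroup E]
    [NormedSpace ℝ E] {φ φ' : ℝ → E} (hφ : ContinuousOn φ (Icc 0 1))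
    (hφ' : ∀ y ∈ Ioo (0 : ℝ) 1, HasDerivAt φ (φ' y) y)
    (hint : IntegrableOn (fun y ↦ ‖φ' y‖ ^ 2) (Icc 0 1)) :
    ‖φ 1 - φ 0‖ ^ 2 ≤ ∫ y in Icc (0 : ℝ) 1, ‖φ' y‖ ^ 2 := by
  have hL2 : MemLp (fun y ↦ ‖φ' y‖) 2 (volume.restrict (Icc 0 1)) := by
    refine (memLp_two_iff_integrable_sq ?_).2 hint
    simpa only [Real.sqrt_sq (norm_nonneg _)] using
      hint.aestronglyMeasurable.aemeasurable.sqrt.aestronglyMeasurable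
  have : IsProbabilityMeasure (volume.restrict (Icc (0 : ℝ) 1)) := ⟨by simp⟩
  have hL1 : IntervalIntegrable (fun y ↦ ‖φ' y‖) volume 0 1 :=
    (intervalIntegrable_iff_integrableOn_Icc_of_le zero_le_one).2 (hL2.integrable one_le_two)
  have hlength : ‖φ 1 - φ 0‖ ≤ ∫ y in Icc (0 : ℝ) 1, ‖φ' y‖ := by
    rw [integral_Icc_eq_integral_Ioc, ← intervalIntegral.integral_of_le zero_le_one]
    refine norm_sub_le_integral_of_norm_deriv_le_of_le zero_le_one hφ
      (fun y hy ↦ (hφ' y hy).differentiableAt.differentiableWithinAt) ?_ hL1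
    exact .of_forall fun y hy ↦ (hφ' y hy).deriv ▸ le_rfl
  calc ‖φ 1 - φ 0‖ ^ 2 ≤ (∫ y in Icc (0 : ℝ) 1, ‖φ' y‖) ^ 2 := by gcongr
    _ ≤ ∫ y in Icc 0 1, ‖φ' y‖ ^ 2 := sq_integral_le_integral_sq hL2

theorem hasDerivAt_comp_add_mul_I {f : ℂ → ℂ} {z : ℂ} {y : ℝ}
    (hf : DifferentiableAt ℂ f (z + y * I)) :
    HasDerivAt (fun t : ℝ ↦ f (z + t * I)) (deriv f (z + y * I) * I) y := by
  have hline : HasDerivAt (fun t : ℂ ↦ z + t * I) I y := by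
    simpa using ((hasDerivAt_id (y : ℂ)).mul_const I).const_add z
  exact (hf.hasDerivAt.comp (y : ℂ) hline).comp_ofReal

theorem norm_sub_sq_le_integral_norm_deriv_sq {f : ℂ → ℂ} {z : ℂ}
    (hcont : ContinuousOn (fun y : ℝ ↦ f (z + y * I)) (Icc 0 1))
    (hdiff : ∀ y ∈ Ioo (0 : ℝ) 1, DifferentiableAt ℂ f (z + y * I))
    (hint : IntegrableOn (fun y : ℝ ↦ ‖deriv f (z + y * I)‖ ^ 2) (Icc 0 1)) :
    ‖f (z + I) - f z‖ ^ 2 ≤ ∫ y in Icc (0 : ℝ) 1, ‖deriv f (z + y * I)‖ ^ 2 := by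
  simpa using norm_sub_sq_le_integral_norm_sq_of_hasDerivAt hcont
    (fun y hy ↦ hasDerivAt_comp_add_mul_I (hdiff y hy)) (by simpa using hint)

theorem modulus_bound_of_separated_sides_general {m δ C : ℝ} (hm : 0 < m) (hδ : 0 < δ)
    (f : ℂ → ℂ) (A B : Set ℂ)
    (hcont : ContinuousOn f (Set.Icc 0 m ×ℂ Set.Icc 0 1))
    (hdiff : DifferentiableOn ℂ f (Set.Ioo 0 m ×ℂ Set.Ioo 0 1))
    (hint : IntegrableOn (fun z => ‖deriv f z‖ ^ 2) (Set.Icc 0 m ×ℂ Set.Icc 0 1))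
    (harea : ∫ z in Set.Icc 0 m ×ℂ Set.Icc 0 1, ‖deriv f z‖ ^ 2 ≤ C)
    (hA : ∀ x ∈ Set.Icc (0:ℝ) m, f (x : ℂ) ∈ A)
    (hB : ∀ x ∈ Set.Icc (0:ℝ) m, f (x + Complex.I) ∈ B)
    (hdist : ∀ a ∈ A, ∀ b ∈ B, δ ≤ dist a b) :
    m ≤ C / δ ^ 2 := by
  have hinterior : ∀ᵐ x ∂volume.restrict (Icc 0 m), x ∈ Ioo 0 m := by
    rw [← Measure.restrict_congr_set Ioo_ae_eq_Icc]
    exact ae_restrict_mem measurableSet_Ioo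
  have hslice : ∀ᵐ x : ℝ ∂volume.restrict (Icc 0 m),
      IntegrableOn (fun y : ℝ ↦ ‖deriv f (x + y * I)‖ ^ 2) (Icc 0 1) →
        δ ^ 2 ≤ ∫ y in Icc (0 : ℝ) 1, ‖deriv f (x + y * I)‖ ^ 2 := by
    filter_upwards [hinterior] with x hx hxint
    have hδx : δ ≤ ‖f (x + I) - f x‖ := by
      simpa [dist_eq_norm'] using hdist _ (hA x (Ioo_subset_Icc_self hx)) _
        (hB x (Ioo_subset_Icc_self hx))
    refine (pow_le_pow_left₀ hδ.le hδx 2).trans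
      (norm_sub_sq_le_integral_norm_deriv_sq ?_ ?_ hxint)
    · exact hcont.comp (by fun_prop) fun y hy ↦ by
        simp [mem_reProdIm, hx.1.le, hx.2.le, hy.1, hy.2]
    · exact fun y hy ↦ hdiff.differentiableAt ((isOpen_Ioo.reProdIm isOpen_Ioo).mem_nhds
        (by simp [mem_reProdIm, hx.1, hx.2, hy.1, hy.2]))
  have hmδ := measureReal_mul_le_setIntegral_prod (by simp) (integrableOn_reProdIm_iff.1 hint)
    hslice
  rw [← Measure.volume_eq_prod, Real.volume_real_Icc_of_le hm.le] at hmδ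
  rw [setIntegral_reProdIm] at harea
  rw [le_div_iff₀ (by positivity)]
  linarith

/-- Modulus bound: if `f` is continuous on the closed rectangle `[0,m] × [0,1]`,
holomorphic on its interior, with area (with multiplicity) of its image bounded
by `C`, and the two horizontal sides are sent into sets `A` and `B` at distance
at least `δ` from each other, then `m ≤ C / δ²`. -/
theorem modulus_bound_of_separated_sides {m δ C : ℝ} (hm : 0 < m) (hδ : 0 < δ)
    (hC : 0 ≤ C) (f : ℂ → ℂ) (A B : Set ℂ)
    (hcont : ContinuousOn f (Set.Icc 0 m ×ℂ Set.Icc 0 1))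
    (hdiff : DifferentiableOn ℂ f (Set.Ioo 0 m ×ℂ Set.Ioo 0 1))
    (hint : IntegrableOn (fun z => ‖deriv f z‖ ^ 2) (Set.Icc 0 m ×ℂ Set.Icc 0 1))
    (harea : ∫ z in Set.Icc 0 m ×ℂ Set.Icc 0 1, ‖deriv f z‖ ^ 2 ≤ C)
    (hA : ∀ x ∈ Set.Icc (0:ℝ) m, f (x : ℂ) ∈ A)
    (hB : ∀ x ∈ Set.Icc (0:ℝ) m, f (x + Complex.I) ∈ B)
    (hdist : ∀ a ∈ A, ∀ b ∈ B, δ ≤ dist a b) :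
    m ≤ C / δ ^ 2 :=
  modulus_bound_of_separated_sides_general hm hδ f A B hcont hdiff hint harea hA hB hdist
end

section
/- Let 0 < ρ < ρ′, C ≥ 0, b ∈ ℂ, and let f be holomorphic on a neighborhood of the quarter annulus Q = {b + r·e^{iθ} : ρ ≤ r ≤ ρ′, π/2 ≤ θ ≤ π} with ∫∫_Q ‖f′(z)‖² dA(z) ≤ C. Then there exists r ∈ [ρ, ρ′] such that the length of the image of the quarter circle of radius r satisfies ∫_{π/2}^{π} ‖f′(b + r·e^{iθ})‖ · r dθ ≤ √(π·C / (2·log(ρ′/ρ))). -/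
open MeasureTheory Complex
open scoped ENNReal Real
open Set

/-! By Cauchy–Schwarz, the squared length `l(r)²` of the image of the arc of radius `r` is at
most `(π/2) · r · A(r)`, where `A(r) = ∫ ‖f'‖² r dθ` over that arc, and `∫ A(r) dr ≤ C` is the area
bound in polar coordinates. The measure `dr/r` gives `[ρ, ρ']` the mass `log (ρ'/ρ)`, so some `r`
has `r · A(r)` at most its `dr/r`-average `C / log (ρ'/ρ)`. -/

theorem ENNReal.lintegral_sq_le_measure_univ_mul {α : Type*} [MeasurableSpace α] (μ : Measure α)
    {f : α → ℝ≥0∞} (hf : AEMeasurable f μ) :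
    (∫⁻ a, f a ∂μ) ^ 2 ≤ μ univ * ∫⁻ a, f a ^ 2 ∂μ := by
  have h := ENNReal.lintegral_mul_le_Lp_mul_Lq μ .two_two hf aemeasurable_const (g := 1)
  simp only [Pi.mul_apply, Pi.one_apply, mul_one, ENNReal.one_rpow, lintegral_const, one_mul] at h
  rw [← ENNReal.mul_rpow_of_nonneg _ _ (by norm_num), one_div,
    ENNReal.le_rpow_inv_iff (by norm_num)] at h
  simpa [mul_comm] using h

theorem lintegral_eq_lintegral_polar (b : ℂ) {g : ℂ → ℝ≥0∞} (hg : Measurable g) :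
    ∫⁻ z, g z = ∫⁻ r in Ioi 0, ∫⁻ θ in Ioo (-π) π,
      ENNReal.ofReal r * g (b + r * exp (θ * I)) := by
  have hsymm : ∀ p : ℝ × ℝ, Complex.polarCoord.symm p = p.1 * exp (p.2 * I) := fun p => by
    rw [Complex.polarCoord_symm_apply, exp_mul_I]; push_cast; ring
  calc ∫⁻ z, g z = ∫⁻ z, g (b + z) := (lintegral_add_left_eq_self g b).symm
    _ = ∫⁻ p in polarCoord.target, ENNReal.ofReal p.1 • g (b + Complex.polarCoord.symm p) :=
      (Complex.lintegral_comp_polarCoord_symm _).symm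
    _ = _ := by
      simp only [hsymm, smul_eq_mul]
      rw [polarCoord_target, Measure.volume_eq_prod, setLIntegral_prod]
      fun_prop

theorem lintegral_polar_le_setLIntegral {Q : Set ℂ} (hQ : MeasurableSet Q) {g : ℂ → ℝ≥0∞}
    (hg : Measurable g) {b : ℂ} {ρ ρ' α β : ℝ} (hρ : 0 < ρ) (hα : -π ≤ α) (hβ : β ≤ π)
    (hmaps : ∀ r ∈ Icc ρ ρ', ∀ θ ∈ Ioo α β, b + r * exp (θ * I) ∈ Q) :
    ∫⁻ r in Icc ρ ρ', ∫⁻ θ in Ioo α β, ENNReal.ofReal r * g (b + r * exp (θ * I)) ≤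
      ∫⁻ z in Q, g z := by
  rw [← lintegral_indicator hQ, lintegral_eq_lintegral_polar b (hg.indicator hQ)]
  calc ∫⁻ r in Icc ρ ρ', ∫⁻ θ in Ioo α β, ENNReal.ofReal r * g (b + r * exp (θ * I))
      = ∫⁻ r in Icc ρ ρ', ∫⁻ θ in Ioo α β,
          ENNReal.ofReal r * Q.indicator g (b + r * exp (θ * I)) :=
        setLIntegral_congr_fun measurableSet_Icc fun r hr =>
          setLIntegral_congr_fun measurableSet_Ioo fun θ hθ => by
            rw [indicator_of_mem (hmaps r hr θ hθ)]
    _ ≤ _ := by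
      gcongr
      exact fun r hr => hρ.trans_le hr.1

theorem isCompact_polar_image (b : ℂ) (ρ ρ' α β : ℝ) :
    IsCompact {z : ℂ | ∃ r ∈ Icc ρ ρ', ∃ θ ∈ Icc α β, z = b + r * exp (θ * I)} := by
  convert (isCompact_Icc.prod isCompact_Icc).image
    (f := fun p : ℝ × ℝ => b + p.1 * exp (p.2 * I)) (by fun_prop) using 1
  ext z
  constructor
  · rintro ⟨r, hr, θ, hθ, rfl⟩
    exact ⟨(r, θ), ⟨hr, hθ⟩, rfl⟩
  · rintro ⟨⟨r, θ⟩, ⟨hr, hθ⟩, rfl⟩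
    exact ⟨r, hr, θ, hθ, rfl⟩

theorem exists_mem_Icc_mul_le_setLIntegral_div_log {ρ ρ' : ℝ} (hρ : 0 < ρ) (hρρ' : ρ < ρ')
    {A : ℝ → ℝ≥0∞} (hA : AEMeasurable A (volume.restrict (Icc ρ ρ'))) :
    ∃ r ∈ Icc ρ ρ', ENNReal.ofReal r * A r ≤
      (∫⁻ r in Icc ρ ρ', A r) / ENNReal.ofReal (Real.log (ρ' / ρ)) := by
  set ν := volume.withDensity fun r : ℝ => ENNReal.ofReal r⁻¹
  have hν : ν (Icc ρ ρ') = ENNReal.ofReal (Real.log (ρ' / ρ)) := by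
    rw [withDensity_apply _ measurableSet_Icc, ← ofReal_integral_eq_lintegral_ofReal,
      integral_Icc_eq_integral_Ioc, ← intervalIntegral.integral_of_le hρρ'.le,
      integral_inv_of_pos hρ (hρ.trans hρρ')]
    · exact (continuousOn_inv₀.mono fun r hr => (hρ.trans_le hr.1).ne').integrableOn_Icc
    · exact (ae_restrict_iff' measurableSet_Icc).2 (.of_forall fun r hr =>
        inv_nonneg.2 (hρ.le.trans hr.1))
  have hlog : 0 < Real.log (ρ' / ρ) := Real.log_pos ((one_lt_div hρ).2 hρρ')
  have hmeas : AEMeasurable (fun r => ENNReal.ofReal r * A r) (ν.restrict (Icc ρ ρ')) :=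
    (measurable_id.ennreal_ofReal.aemeasurable.mul hA).mono_ac
      ((withDensity_absolutelyContinuous _ _).restrict _)
  obtain ⟨r, hr, hle⟩ := exists_le_setLAverage (by simpa [hν] using hlog)
    (by simp [hν]) hmeas
  refine ⟨r, hr, hle.trans_eq ?_⟩
  rw [setLAverage_eq, hν, setLIntegral_withDensity_eq_setLIntegral_mul_non_measurable _
    (by fun_prop) _ measurableSet_Icc (.of_forall fun _ => ENNReal.ofReal_lt_top)]
  congr 1
  refine setLIntegral_congr_fun measurableSet_Icc fun r hr => ?_
  have hr0 : 0 < r := hρ.trans_le hr.1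
  rw [Pi.mul_apply, ← mul_assoc, ← ENNReal.ofReal_mul (inv_nonneg.2 hr0.le),
    inv_mul_cancel₀ hr0.ne', ENNReal.ofReal_one, one_mul]

theorem exists_sq_lintegral_arc_le {Q : Set ℂ} (hQ : MeasurableSet Q) {g : ℂ → ℝ≥0∞}
    (hg : Measurable g) {b : ℂ} {ρ ρ' α β : ℝ} (hρ : 0 < ρ) (hρρ' : ρ < ρ') (hα : -π ≤ α)
    (hβ : β ≤ π) (hmaps : ∀ r ∈ Icc ρ ρ', ∀ θ ∈ Ioo α β, b + r * exp (θ * I) ∈ Q) :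
    ∃ r ∈ Icc ρ ρ', (∫⁻ θ in Ioo α β, g (b + r * exp (θ * I)) * ENNReal.ofReal r) ^ 2 ≤
      ENNReal.ofReal (β - α) * (∫⁻ z in Q, g z ^ 2) / ENNReal.ofReal (Real.log (ρ' / ρ)) := by
  set A : ℝ → ℝ≥0∞ :=
    fun r => ∫⁻ θ in Ioo α β, ENNReal.ofReal r * g (b + r * exp (θ * I)) ^ 2 with hA_def
  have hA : Measurable A := Measurable.lintegral_prod_right'
    (f := fun p : ℝ × ℝ => ENNReal.ofReal p.1 * g (b + p.1 * exp (p.2 * I)) ^ 2) (by fun_prop)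
  obtain ⟨r, hr, hrA⟩ := exists_mem_Icc_mul_le_setLIntegral_div_log hρ hρρ' hA.aemeasurable
  refine ⟨r, hr, ?_⟩
  calc _ ≤ volume (Ioo α β) *
        ∫⁻ θ in Ioo α β, (g (b + r * exp (θ * I)) * ENNReal.ofReal r) ^ 2 := by
        simpa using ENNReal.lintegral_sq_le_measure_univ_mul (volume.restrict (Ioo α β))
          (f := fun θ : ℝ => g (b + r * exp (θ * I)) * ENNReal.ofReal r) (by fun_prop)
    _ = ENNReal.ofReal (β - α) * (ENNReal.ofReal r * A r) := by
        rw [Real.volume_Ioo, hA_def, ← lintegral_const_mul' (ENNReal.ofReal r) _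
          ENNReal.ofReal_ne_top]
        congr 1
        refine lintegral_congr fun θ => ?_
        ring
    _ ≤ ENNReal.ofReal (β - α) * ((∫⁻ z in Q, g z ^ 2) / ENNReal.ofReal (Real.log (ρ' / ρ))) := by
        gcongr
        exact hrA.trans <| by
          gcongr
          exact lintegral_polar_le_setLIntegral hQ (hg.pow_const 2) hρ hα hβ hmaps
    _ = _ := (mul_div_assoc _ _ _).symm

theorem intervalIntegral_le_of_setLIntegral_enorm_le {F : ℝ → ℝ} {a b L : ℝ} (hab : a ≤ b)
    (hL : 0 ≤ L) (h : ∫⁻ θ in Ioo a b, ‖F θ‖ₑ ≤ ENNReal.ofReal L) :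
    ∫ θ in a..b, F θ ≤ L := by
  have : ‖∫ θ in Ioc a b, F θ‖ₑ ≤ ‖L‖ₑ := by
    rw [Real.enorm_of_nonneg hL]
    rw [setLIntegral_congr Ioo_ae_eq_Ioc] at h
    exact (enorm_integral_le_lintegral_enorm _).trans h
  rw [intervalIntegral.integral_of_le hab]
  exact (le_abs_self _).trans ((enorm_le_iff_norm_le.1 this).trans_eq (abs_of_nonneg hL))

theorem exists_short_quarter_circle_general {ρ ρ' C : ℝ} (hρ : 0 < ρ) (hρρ' : ρ < ρ')
    (b : ℂ) (f : ℂ → ℂ)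
    (Q : Set ℂ)
    (hQ : Q = {z : ℂ | ∃ r ∈ Set.Icc ρ ρ', ∃ θ ∈ Set.Icc (Real.pi / 2) Real.pi,
      z = b + r * Complex.exp (θ * Complex.I)})
    (hint : IntegrableOn (fun z => ‖deriv f z‖ ^ 2) Q)
    (harea : ∫ z in Q, ‖deriv f z‖ ^ 2 ≤ C) :
    ∃ r ∈ Set.Icc ρ ρ',
      ∫ θ in (Real.pi / 2)..Real.pi,
          ‖deriv f (b + r * Complex.exp (θ * Complex.I))‖ * r ≤
        Real.sqrt (Real.pi * C / (2 * Real.log (ρ' / ρ))) := by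
  have hQ_meas : MeasurableSet Q := hQ ▸ (isCompact_polar_image b ρ ρ' _ _).measurableSet
  have hC : 0 ≤ C := (integral_nonneg fun z => by positivity).trans harea
  have hlog : 0 < Real.log (ρ' / ρ) := Real.log_pos ((one_lt_div hρ).2 hρρ')
  have harea' : ∫⁻ z in Q, ‖deriv f z‖ₑ ^ 2 ≤ ENNReal.ofReal C := by
    simp_rw [← ofReal_norm, ← ENNReal.ofReal_pow (norm_nonneg _)]
    rw [← ofReal_integral_eq_lintegral_ofReal hint (.of_forall fun z => by positivity)]
    exact ENNReal.ofReal_le_ofReal harea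
  obtain ⟨r, hr, hlen⟩ := exists_sq_lintegral_arc_le (α := π / 2) hQ_meas
    (measurable_deriv f).enorm hρ hρρ' (by linarith [Real.pi_pos]) le_rfl fun r hr θ hθ => by
      rw [hQ]; exact ⟨r, hr, θ, Ioo_subset_Icc_self hθ, rfl⟩
  have hbound : ENNReal.ofReal (π - π / 2) * ENNReal.ofReal C / ENNReal.ofReal (Real.log (ρ' / ρ))
      = ENNReal.ofReal (Real.sqrt (π * C / (2 * Real.log (ρ' / ρ)))) ^ 2 := by
    rw [← ENNReal.ofReal_pow (Real.sqrt_nonneg _), Real.sq_sqrt (by positivity),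
      ← ENNReal.ofReal_mul (by linarith [Real.pi_pos]), ← ENNReal.ofReal_div_of_pos hlog]
    congr 1
    ring
  refine ⟨r, hr, intervalIntegral_le_of_setLIntegral_enorm_le (by linarith [Real.pi_pos])
    (Real.sqrt_nonneg _) ?_⟩
  rw [← ENNReal.pow_le_pow_left_iff two_ne_zero, ← hbound]
  refine (le_of_eq ?_).trans (hlen.trans (by gcongr))
  simp only [enorm_mul, enorm_norm, Real.enorm_of_nonneg (hρ.le.trans hr.1)]

/-- Length–area argument on a quarter annulus: if `f` is holomorphic on a
neighborhood of the quarter annulus `Q` centered at `b` with radii `ρ ≤ r ≤ ρ'`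
and angles `π/2 ≤ θ ≤ π`, and the area with multiplicity of its image is at
most `C`, then some quarter circle of radius `r ∈ [ρ, ρ']` has image of length
at most `√(π C / (2 log(ρ'/ρ)))`. -/
theorem exists_short_quarter_circle {ρ ρ' C : ℝ} (hρ : 0 < ρ) (hρρ' : ρ < ρ')
    (hC : 0 ≤ C) (b : ℂ) (f : ℂ → ℂ) (U : Set ℂ)
    (Q : Set ℂ)
    (hQ : Q = {z : ℂ | ∃ r ∈ Set.Icc ρ ρ', ∃ θ ∈ Set.Icc (Real.pi / 2) Real.pi,
      z = b + r * Complex.exp (θ * Complex.I)})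
    (hU : IsOpen U) (hQU : Q ⊆ U)
    (hf : DifferentiableOn ℂ f U)
    (hint : IntegrableOn (fun z => ‖deriv f z‖ ^ 2) Q)
    (harea : ∫ z in Q, ‖deriv f z‖ ^ 2 ≤ C) :
    ∃ r ∈ Set.Icc ρ ρ',
      ∫ θ in (Real.pi / 2)..Real.pi,
          ‖deriv f (b + r * Complex.exp (θ * Complex.I))‖ * r ≤
        Real.sqrt (Real.pi * C / (2 * Real.log (ρ' / ρ))) :=
  exists_short_quarter_circle_general hρ hρρ' b f Q hQ hint harea
end
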